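/- Let J be a poset and let I := D(J) be the lattice of downsets of J (a closed set system, with least element ∅ and greatest element J). Regard J as the vertex set of a graph in which two elements are adjacent iff they are comparable; a subset is called connected iff the induced subgraph on it is connected. For downsets z ⊆ q ⊆ p ⊆ b, let Z(z,q,p,b) be the union of the connected components of p∖z that intersect p∖q, and B(z,q,p,b) the union of the connected components of b∖q that intersect p∖q. Let E be an excisive exact couple system over I. If z ⊆ q ⊆ p ⊆ b and z' ⊆ q' ⊆ p' ⊆ b' are quadruples of downsets with Z(z,q,p,b) = Z(z',q',p',b') and B(z,q,p,b) = B(z',q',p',b'), then S^{pz}_{bq} ≅ S^{p'z'}_{b'q'}. -/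

import Mathlib

open Function

universe u v

/-- An exact couple system over a bounded poset `I`: abelian groups `E^p_q` for `q ≤ p`,
functorial maps `ℓ`, boundary maps `k_{pq} : E^p_q → D_q` (where `D_p := E^p_⊥`), exact
triangles `D_q → D_p → E^p_q → D_q`, and naturality of `k`. -/
structure ExactCoupleSystem (I : Type u) [PartialOrder I] [BoundedOrder I] where
  /-- the abelian groups `E^p_q` -/
  E : ∀ p q : I, q ≤ p → AddCommGrpCat.{v}
  /-- the structure maps `ℓ : E^p_q → E^{p'}_{q'}` for `p ≤ p'`, `q ≤ q'` -/
  l : ∀ {p q p' q' : I} (h : q ≤ p) (h' : q' ≤ p'), p ≤ p' → q ≤ q' →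
      (E p q h →+ E p' q' h')
  /-- the boundary maps `k_{pq} : E^p_q → D_q` -/
  k : ∀ {p q : I} (h : q ≤ p), (E p q h →+ E q ⊥ bot_le)
  l_id : ∀ {p q : I} (h : q ≤ p), l h h le_rfl le_rfl = AddMonoidHom.id _
  l_comp : ∀ {p q p' q' p'' q'' : I} (h : q ≤ p) (h' : q' ≤ p') (h'' : q'' ≤ p'')
      (hp : p ≤ p') (hq : q ≤ q') (hp' : p' ≤ p'') (hq' : q' ≤ q''),
      (l h' h'' hp' hq').comp (l h h' hp hq) = l h h'' (hp.trans hp') (hq.trans hq')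
  exact_ij : ∀ {p q : I} (h : q ≤ p),
      (l (bot_le : (⊥ : I) ≤ q) (bot_le : (⊥ : I) ≤ p) h le_rfl).range =
        (l (bot_le : (⊥ : I) ≤ p) h le_rfl bot_le).ker
  exact_jk : ∀ {p q : I} (h : q ≤ p),
      (l (bot_le : (⊥ : I) ≤ p) h le_rfl bot_le).range = (k h).ker
  exact_ki : ∀ {p q : I} (h : q ≤ p),
      (k h).range = (l (bot_le : (⊥ : I) ≤ q) (bot_le : (⊥ : I) ≤ p) h le_rfl).ker
  k_nat : ∀ {p q p' q' : I} (h : q ≤ p) (h' : q' ≤ p') (hp : p ≤ p') (hq : q ≤ q'),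
      (l (bot_le : (⊥ : I) ≤ q) (bot_le : (⊥ : I) ≤ q') hq le_rfl).comp (k h) =
        (k h').comp (l h h' hp hq)

namespace ExactCoupleSystem

variable {I : Type u} [PartialOrder I] [BoundedOrder I] (X : ExactCoupleSystem.{u, v} I)

/-- `D_p := E^p_{−∞}`. -/
abbrev D (p : I) := X.E p ⊥ bot_le

/-- `i_{qp} : D_q → D_p`. -/
def i {q p : I} (h : q ≤ p) : X.D q →+ X.D p := X.l bot_le bot_le h le_rfl

/-- `j_{pq} : D_p → E^p_q`. -/
def j {q p : I} (h : q ≤ p) : X.D p →+ X.E p q h := X.l bot_le h le_rfl bot_le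

/-- The differential `d_{pqz} = j_{qz} ∘ k_{pq} : E^p_q → E^q_z`. -/
def dd {z q p : I} (hzq : z ≤ q) (hqp : q ≤ p) : X.E p q hqp →+ X.E q z hzq :=
  (X.j hzq).comp (X.k hqp)

/-- The S-term `S^{pz}_{bq} = ker(d_{pqz}) / im(d_{bpq})` of an exact couple system. -/
abbrev Sterm {z q p b : I} (hzq : z ≤ q) (hqp : q ≤ p) (hpb : p ≤ b) :=
  ↥(X.dd hzq hqp).ker ⧸ (X.dd hqp hpb).range.addSubgroupOf (X.dd hzq hqp).ker

/-- The class in `S^{pz}_{bq}` of an element `x ∈ ker(d_{pqz})`. -/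
def Scls {z q p b : I} (hzq : z ≤ q) (hqp : q ≤ p) (hpb : p ≤ b)
    {x : X.E p q hqp} (hx : x ∈ (X.dd hzq hqp).ker) : X.Sterm hzq hqp hpb :=
  QuotientAddGroup.mk ⟨x, hx⟩

end ExactCoupleSystem

/-- An exact couple system over a bounded lattice is excisive if all the maps
`ℓ : E^a_{a⊓b} → E^{a⊔b}_b` are isomorphisms. -/
def ExactCoupleSystem.IsExcisive {I : Type u} [Lattice I] [BoundedOrder I]
    (X : ExactCoupleSystem.{u, v} I) : Prop :=
  ∀ a b : I, Function.Bijective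
    (X.l (inf_le_left : a ⊓ b ≤ a) (le_sup_right : b ≤ a ⊔ b) le_sup_left inf_le_right)

/-- A single step of a path inside `A`: both endpoints are in `A` and they are
comparable. -/
def StepIn {V : Type*} [Preorder V] (A : Set V) (a b : V) : Prop :=
  a ∈ A ∧ b ∈ A ∧ (a ≤ b ∨ b ≤ a)

/-- `x` and `y` are joined by a path inside `A` whose consecutive points are comparable. -/
def ReachIn {V : Type*} [Preorder V] (A : Set V) : V → V → Prop :=
  Relation.ReflTransGen (StepIn A)

/-- `Z(z,q,p,b)`: the union of the connected components of `p∖z` that intersect `p∖q`. -/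
def Zset {V : Type*} [Preorder V] (z q p b : Set V) : Set V :=
  {x | x ∈ p \ z ∧ ∃ y ∈ p \ q, ReachIn (p \ z) x y}

/-- `B(z,q,p,b)`: the union of the connected components of `b∖q` that intersect `p∖q`. -/
def Bset {V : Type*} [Preorder V] (z q p b : Set V) : Set V :=
  {x | x ∈ b \ q ∧ ∃ y ∈ p \ q, ReachIn (b \ q) x y}


/-!
Both quadruples are compared with their join `(z ⊔ z', q ⊔ q', p ⊔ p', b ⊔ b')`, which has the
same `Z` and `B`: every element of `(p ∪ p') \ (z ∪ z')` lies in `p \ z` or in `p' \ z'`, and `Z`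
is a union of connected components of both, hence also of `(p ∪ p') \ (z ∪ z')`; likewise for `B`.

For a componentwise larger quadruple `(z₁, q₁, p₁, b₁)` with the same `Z` and `B`, both `p \ q`
and `p₁ \ q₁` equal `Z ∩ B`, so `p ⊓ q₁ = q`, `p ⊔ q₁ = p₁`, and excision makes
`ℓ : E^p_q → E^{p₁}_{q₁}` an isomorphism. It commutes with the differentials and, by further
excisions, matches their kernels and images; the lower sets these need are obtained by cutting
`p`, `p₁`, `b` and `b₁` along the unions of components `Z` and `B`.
-/

def AddEquiv.quotientAddSubgroupOfCongr {A B : Type*} [AddCommGroup A] [AddCommGroup B]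
    (e : A ≃+ B) {K H : AddSubgroup A} {K' H' : AddSubgroup B}
    (hK : ∀ x, x ∈ K ↔ e x ∈ K') (hH : ∀ x ∈ K, x ∈ H ↔ e x ∈ H') :
    (K ⧸ H.addSubgroupOf K) ≃+ (K' ⧸ H'.addSubgroupOf K') :=
  have hKK' : K.map e.toAddMonoidHom = K' := by
    ext y
    refine ⟨?_, fun hy => ⟨e.symm y, (hK _).2 (by simpa using hy), by simp⟩⟩
    rintro ⟨x, hx, rfl⟩
    exact (hK x).1 hx
  QuotientAddGroup.congr _ _ ((e.addSubgroupMap K).trans (AddEquiv.addSubgroupCongr hKK')) <| by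
    ext ⟨y, hy⟩
    obtain ⟨x, rfl⟩ := e.surjective y
    have hx : x ∈ K := (hK x).2 hy
    simp only [AddSubgroup.mem_map, AddSubgroup.mem_addSubgroupOf]
    constructor
    · rintro ⟨⟨a, ha⟩, haH, hae⟩
      obtain rfl : a = x := e.injective (congrArg Subtype.val hae)
      exact (hH a ha).1 haH
    · exact fun hxH => ⟨⟨x, hx⟩, (hH x hx).2 hxH, rfl⟩

namespace ExactCoupleSystem

section Poset

variable {I : Type u} [PartialOrder I] [BoundedOrder I] (X : ExactCoupleSystem.{u, v} I)

theorem l_l_apply {p q p' q' p'' q'' : I} (h : q ≤ p) (h' : q' ≤ p') (h'' : q'' ≤ p'')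
    (hp : p ≤ p') (hq : q ≤ q') (hp' : p' ≤ p'') (hq' : q' ≤ q'') (x : X.E p q h) :
    X.l h' h'' hp' hq' (X.l h h' hp hq x) = X.l h h'' (hp.trans hp') (hq.trans hq') x := by
  rw [← AddMonoidHom.comp_apply, X.l_comp]

theorem l_self_apply {p q : I} (h : q ≤ p) (x : X.E p q h) : X.l h h le_rfl le_rfl x = x := by
  rw [X.l_id, AddMonoidHom.id_apply]

theorem k_l_apply {p q p' q' : I} (h : q ≤ p) (h' : q' ≤ p') (hp : p ≤ p') (hq : q ≤ q')
    (x : X.E p q h) : X.k h' (X.l h h' hp hq x) = X.i hq (X.k h x) := by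
  rw [← AddMonoidHom.comp_apply, ← X.k_nat h h' hp hq]
  rfl

theorem i_i_apply {a b c : I} (hab : a ≤ b) (hbc : b ≤ c) (y : X.D a) :
    X.i hbc (X.i hab y) = X.i (hab.trans hbc) y :=
  X.l_l_apply bot_le bot_le bot_le hab le_rfl hbc le_rfl y

theorem i_k_apply {p q : I} (h : q ≤ p) (x : X.E p q h) : X.i h (X.k h x) = 0 := by
  have hx : X.k h x ∈ (X.k h).range := ⟨x, rfl⟩
  rwa [X.exact_ki] at hx

theorem j_i_apply {p q : I} (h : q ≤ p) (y : X.D q) : X.j h (X.i h y) = 0 := by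
  have hy : X.i h y ∈ (X.i h).range := ⟨y, rfl⟩
  rwa [i, X.exact_ij] at hy

theorem exists_i_eq_of_j_eq_zero {p q : I} (h : q ≤ p) {y : X.D p} (hy : X.j h y = 0) :
    ∃ t, X.i h t = y := by
  rw [← AddMonoidHom.mem_ker, j, ← X.exact_ij] at hy
  exact hy

theorem exists_k_eq_of_i_eq_zero {p q : I} (h : q ≤ p) {y : X.D q} (hy : X.i h y = 0) :
    ∃ x, X.k h x = y := by
  rw [← AddMonoidHom.mem_ker, i, ← X.exact_ki] at hy
  exact hy

theorem dd_l_apply {z q p z' q' p' : I} (hzq : z ≤ q) (hqp : q ≤ p) (hz'q' : z' ≤ q')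
    (hq'p' : q' ≤ p') (hz : z ≤ z') (hq : q ≤ q') (hp : p ≤ p') (x : X.E p q hqp) :
    X.dd hz'q' hq'p' (X.l hqp hq'p' hp hq x) = X.l hzq hz'q' hq hz (X.dd hzq hqp x) := by
  simp only [dd, j, i, AddMonoidHom.comp_apply, k_l_apply, l_l_apply]

theorem ker_dd_mono {z z' q p : I} (hzq : z ≤ q) (hz'q : z' ≤ q) (hqp : q ≤ p)
    (hz : z ≤ z') : (X.dd hzq hqp).ker ≤ (X.dd hz'q hqp).ker := by
  intro x hx
  rw [AddMonoidHom.mem_ker] at hx ⊢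
  rw [← X.l_self_apply hqp x, X.dd_l_apply hzq hqp hz'q hqp hz le_rfl le_rfl, hx, map_zero]

theorem range_dd_mono {q p b b' : I} (hqp : q ≤ p) (hpb : p ≤ b) (hpb' : p ≤ b')
    (hb : b ≤ b') : (X.dd hqp hpb).range ≤ (X.dd hqp hpb').range := by
  rintro _ ⟨m, rfl⟩
  exact ⟨X.l hpb hpb' hb le_rfl m, by
    rw [X.dd_l_apply hqp hpb hqp hpb' le_rfl le_rfl hb, X.l_self_apply]⟩

theorem mem_ker_of_l_mem_ker {z q p z' q' p' : I} (hzq : z ≤ q) (hqp : q ≤ p)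
    (hz'q' : z' ≤ q') (hq'p' : q' ≤ p') (hz : z ≤ z') (hq : q ≤ q') (hp : p ≤ p')
    (hinj : Injective (X.l hzq hz'q' hq hz)) {x : X.E p q hqp}
    (hx : X.l hqp hq'p' hp hq x ∈ (X.dd hz'q' hq'p').ker) : x ∈ (X.dd hzq hqp).ker := by
  rw [AddMonoidHom.mem_ker, X.dd_l_apply hzq hqp hz'q' hq'p' hz hq hp] at hx
  exact (map_eq_zero_iff _ hinj).1 hx

theorem mem_range_of_l_mem_range {q p b q' p' b' : I} (hqp : q ≤ p) (hpb : p ≤ b)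
    (hq'p' : q' ≤ p') (hp'b' : p' ≤ b') (hq : q ≤ q') (hp : p ≤ p') (hb : b ≤ b')
    (hsurj : Surjective (X.l hpb hp'b' hb hp)) (hinj : Injective (X.l hqp hq'p' hp hq))
    {x : X.E p q hqp} (hx : X.l hqp hq'p' hp hq x ∈ (X.dd hq'p' hp'b').range) :
    x ∈ (X.dd hqp hpb).range := by
  obtain ⟨m', hm'⟩ := hx
  obtain ⟨m, rfl⟩ := hsurj m'
  exact ⟨m, hinj (by rw [← hm', X.dd_l_apply])⟩

noncomputable def stermEquivOfBijective {z q p b z' q' p' b' : I} (hzq : z ≤ q)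
    (hqp : q ≤ p) (hpb : p ≤ b) (hz'q' : z' ≤ q') (hq'p' : q' ≤ p') (hp'b' : p' ≤ b')
    (hz : z ≤ z') (hq : q ≤ q') (hp : p ≤ p') (hb : b ≤ b')
    (hbij : Bijective (X.l hqp hq'p' hp hq))
    (hker : ∀ x, X.l hqp hq'p' hp hq x ∈ (X.dd hz'q' hq'p').ker → x ∈ (X.dd hzq hqp).ker)
    (hrange : ∀ x, X.l hqp hq'p' hp hq x ∈ (X.dd hq'p' hp'b').range →
      x ∈ (X.dd hqp hpb).range) :
    X.Sterm hzq hqp hpb ≃+ X.Sterm hz'q' hq'p' hp'b' :=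
  (AddEquiv.ofBijective _ hbij).quotientAddSubgroupOfCongr
    (fun x => ⟨fun hx => by
      rw [AddEquiv.ofBijective_apply, AddMonoidHom.mem_ker,
        X.dd_l_apply hzq hqp hz'q' hq'p' hz hq hp, hx, map_zero], hker x⟩)
    (fun x _ => ⟨fun ⟨m, hm⟩ => ⟨X.l hpb hp'b' hb hp m, by
      rw [X.dd_l_apply hqp hpb hq'p' hp'b' hq hp hb, hm, AddEquiv.ofBijective_apply]⟩,
      hrange x⟩)

end Poset

section Lattice

variable {I : Type u} [Lattice I] [BoundedOrder I] {X : ExactCoupleSystem.{u, v} I}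

theorem IsExcisive.bijective_l (hexc : X.IsExcisive) {a w m s : I} (hinf : a ⊓ w = m)
    (hsup : a ⊔ w = s) (h₁ : m ≤ a) (h₂ : w ≤ s) (h₃ : a ≤ s) (h₄ : m ≤ w) :
    Bijective (X.l h₁ h₂ h₃ h₄) := by
  subst hinf hsup
  exact hexc a w

theorem IsExcisive.exists_i_eq_of_i_eq_zero (hexc : X.IsExcisive) {z w p c : I}
    (hinf : c ⊓ w = z) (hsup : c ⊔ w = p) (hzw : z ≤ w) (hwp : w ≤ p) {y : X.D w}
    (hy : X.i hwp y = 0) : ∃ t, X.i hzw t = y := by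
  have hzc : z ≤ c := hinf ▸ inf_le_left
  have hcp : c ≤ p := hsup ▸ le_sup_left
  obtain ⟨x, rfl⟩ := X.exists_k_eq_of_i_eq_zero hwp hy
  obtain ⟨x', rfl⟩ := (hexc.bijective_l hinf hsup hzc hwp hcp hzw).2 x
  exact ⟨X.k hzc x', (X.k_l_apply hzc hwp hcp hzw x').symm⟩

theorem IsExcisive.ker_dd_le (hexc : X.IsExcisive) {z w q p c : I} (hinf : c ⊓ w = z)
    (hsup : c ⊔ w = p) (hzq : z ≤ q) (hwq : w ≤ q) (hqp : q ≤ p) :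
    (X.dd hwq hqp).ker ≤ (X.dd hzq hqp).ker := by
  intro x hx
  have hzw : z ≤ w := hinf ▸ inf_le_right
  obtain ⟨t, ht⟩ := X.exists_i_eq_of_j_eq_zero hwq hx
  have hdies : X.i (hwq.trans hqp) t = 0 := by
    rw [← X.i_i_apply hwq hqp, ht, X.i_k_apply]
  obtain ⟨s, rfl⟩ := hexc.exists_i_eq_of_i_eq_zero hinf hsup hzw (hwq.trans hqp) hdies
  rw [AddMonoidHom.mem_ker, dd, AddMonoidHom.comp_apply, ← ht, X.i_i_apply, X.j_i_apply]

theorem IsExcisive.range_dd_le (hexc : X.IsExcisive) {q p d b c : I} (hinf : c ⊓ d = q)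
    (hsup : c ⊔ d = b) (hqp : q ≤ p) (hpd : p ≤ d) (hpb : p ≤ b) :
    (X.dd hqp hpb).range ≤ (X.dd hqp hpd).range := by
  rintro _ ⟨m, rfl⟩
  have hdb : d ≤ b := hsup ▸ le_sup_right
  have hdies : X.i hdb (X.i hpd (X.k hpb m)) = 0 := by
    rw [X.i_i_apply, X.i_k_apply]
  obtain ⟨v, hv⟩ := hexc.exists_i_eq_of_i_eq_zero hinf hsup (hqp.trans hpd) hdb hdies
  obtain ⟨m₂, hm₂⟩ : ∃ m₂, X.k hpd m₂ = X.k hpb m - X.i hqp v := by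
    refine X.exists_k_eq_of_i_eq_zero hpd ?_
    rw [map_sub, X.i_i_apply, hv, sub_self]
  refine ⟨m₂, ?_⟩
  rw [dd, AddMonoidHom.comp_apply, hm₂, map_sub, X.j_i_apply, sub_zero]
  rfl

theorem IsExcisive.mem_ker_of_l_mem_ker (hexc : X.IsExcisive) {z q p z₁ q₁ p₁ c w W : I}
    (hzq : z ≤ q) (hqp : q ≤ p) (hzq₁ : z₁ ≤ q₁) (hqp₁ : q₁ ≤ p₁) (hq : q ≤ q₁)
    (hp : p ≤ p₁) (hcw : c ⊓ w = z) (hcw' : c ⊔ w = p) (hqW : q ⊓ W = w) (hqW' : q ⊔ W = q₁)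
    (hz₁W : z₁ ≤ W) {x : X.E p q hqp} (hx : X.l hqp hqp₁ hp hq x ∈ (X.dd hzq₁ hqp₁).ker) :
    x ∈ (X.dd hzq hqp).ker := by
  have hwq : w ≤ q := hqW ▸ inf_le_left
  have hwW : w ≤ W := hqW ▸ inf_le_right
  have hWq₁ : W ≤ q₁ := hqW' ▸ le_sup_right
  have hinj := (hexc.bijective_l hqW hqW' hwq hWq₁ hq hwW).1
  exact hexc.ker_dd_le hcw hcw' hzq hwq hqp <|
    X.mem_ker_of_l_mem_ker hwq hqp hWq₁ hqp₁ hwW hq hp hinj <|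
    X.ker_dd_mono hzq₁ hWq₁ hqp₁ hz₁W hx

theorem IsExcisive.mem_range_of_l_mem_range (hexc : X.IsExcisive)
    {q p b q₁ p₁ b₁ D D₁ c : I} (hqp : q ≤ p) (hpb : p ≤ b) (hqp₁ : q₁ ≤ p₁)
    (hpb₁ : p₁ ≤ b₁) (hq : q ≤ q₁) (hp : p ≤ p₁) (hinf : p ⊓ q₁ = q) (hsup : p ⊔ q₁ = p₁)
    (hDb : D ≤ b) (hDp₁ : D ⊓ p₁ = p) (hDp₁' : D ⊔ p₁ = D₁) (hcD₁ : c ⊓ D₁ = q₁)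
    (hcD₁' : c ⊔ D₁ = b₁) {x : X.E p q hqp}
    (hx : X.l hqp hqp₁ hp hq x ∈ (X.dd hqp₁ hpb₁).range) : x ∈ (X.dd hqp hpb).range := by
  have hpD : p ≤ D := hDp₁ ▸ inf_le_left
  have hp₁D₁ : p₁ ≤ D₁ := hDp₁' ▸ le_sup_right
  have hDD₁ : D ≤ D₁ := hDp₁' ▸ le_sup_left
  have hsurj := (hexc.bijective_l hDp₁ hDp₁' hpD hp₁D₁ hDD₁ hp).2
  have hinj := (hexc.bijective_l hinf hsup hqp hqp₁ hp hq).1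
  exact X.range_dd_mono hqp hpD hpb hDb <|
    X.mem_range_of_l_mem_range hqp hpD hqp₁ hp₁D₁ hq hp hDD₁ hsurj hinj <|
    hexc.range_dd_le hcD₁ hcD₁' hqp₁ hp₁D₁ hpb₁ hx

end Lattice

end ExactCoupleSystem

theorem union_sdiff_union_of_sdiff_eq {V : Type*} {p q p' q' : Set V}
    (h : p \ q = p' \ q') : (p ∪ p') \ (q ∪ q') = p \ q := by
  ext x
  have hx := Set.ext_iff.1 h x
  simp only [Set.mem_union, Set.mem_sdiff] at hx ⊢
  tauto

section Components

variable {V : Type*} [Preorder V]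

def reachSet (A T : Set V) : Set V :=
  {x | x ∈ A ∧ ∃ y ∈ T, ReachIn A x y}

/-- For `S ⊆ A`: `S` is a union of connected components of `A`. -/
def IsStepClosed (A S : Set V) : Prop :=
  ∀ ⦃u v⦄, StepIn A u v → v ∈ S → u ∈ S

theorem reachSet_subset (A T : Set V) : reachSet A T ⊆ A :=
  fun _ hx => hx.1

theorem subset_reachSet {A T : Set V} (hT : T ⊆ A) : T ⊆ reachSet A T :=
  fun x hx => ⟨hT hx, x, hx, .refl⟩

theorem isStepClosed_reachSet (A T : Set V) : IsStepClosed A (reachSet A T) :=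
  fun _ _ huv ⟨_, y, hy, hvy⟩ => ⟨huv.1, y, hy, .head huv hvy⟩

theorem reachSet_eq_of_subset_union {A A' A'' T : Set V} (h : reachSet A T = reachSet A' T)
    (hsub : reachSet A T ⊆ A'') (hunion : A'' ⊆ A ∪ A') :
    reachSet A'' T = reachSet A T := by
  have hstep : ∀ ⦃u⦄, u ∈ A'' → ∀ ⦃v⦄, StepIn A'' u v → v ∈ reachSet A T →
      u ∈ reachSet A T := by
    intro u hu v huv hv
    rcases hunion hu with huA | huA'
    · exact isStepClosed_reachSet A T ⟨huA, reachSet_subset A T hv, huv.2.2⟩ hv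
    · rw [h] at hv ⊢
      exact isStepClosed_reachSet A' T ⟨huA', reachSet_subset A' T hv, huv.2.2⟩ hv
  have hbase : ∀ ⦃y⦄, y ∈ A'' → y ∈ T → y ∈ reachSet A T := by
    intro y hy'' hy
    rcases hunion hy'' with hyA | hyA'
    · exact ⟨hyA, y, hy, .refl⟩
    · exact h ▸ ⟨hyA', y, hy, .refl⟩
  apply Set.Subset.antisymm
  · rintro x ⟨hx, y, hy, hxy⟩
    induction hxy using Relation.ReflTransGen.head_induction_on with
    | refl => exact hbase hx hy
    | head huv _ ih => exact hstep hx huv (ih huv.2.1)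
  · rintro x ⟨hx, y, hy, hxy⟩
    refine ⟨hsub ⟨hx, y, hy, hxy⟩, y, hy, ?_⟩
    induction hxy using Relation.ReflTransGen.head_induction_on with
    | refl => exact .refl
    | @head u w huw hwy ih =>
      exact .head ⟨hsub ⟨huw.1, y, hy, .head huw hwy⟩, hsub ⟨huw.2.1, y, hy, hwy⟩, huw.2.2⟩
        (ih huw.2.1)

theorem IsStepClosed.isLowerSet_union {a b S : Set V} (hS : IsStepClosed (b \ a) S)
    (ha : IsLowerSet a) (hb : IsLowerSet b) (hSb : S ⊆ b \ a) : IsLowerSet (a ∪ S) := by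
  rintro x y hyx (hx | hx)
  · exact Or.inl (ha hyx hx)
  · by_cases hya : y ∈ a
    · exact Or.inl hya
    · exact Or.inr (hS ⟨⟨hb hyx (hSb hx).1, hya⟩, hSb hx, Or.inl hyx⟩ hx)

theorem IsStepClosed.isLowerSet_sdiff {a b S : Set V} (hS : IsStepClosed (b \ a) S)
    (ha : IsLowerSet a) (hb : IsLowerSet b) (hSb : S ⊆ b \ a) : IsLowerSet (b \ S) := by
  rintro x y hyx ⟨hxb, hxS⟩
  refine ⟨hb hyx hxb, fun hyS => hxS (hS ⟨⟨hxb, fun hxa => ?_⟩, hSb hyS, Or.inr hyx⟩ hyS)⟩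
  exact (hSb hyS).2 (ha hyx hxa)

theorem IsStepClosed.exists_lowerSet_split {a b : LowerSet V} {S : Set V}
    (hS : IsStepClosed (↑b \ ↑a) S) (hab : a ≤ b) (hSb : S ⊆ ↑b \ ↑a) :
    ∃ c d : LowerSet V, (c : Set V) = ↑a ∪ S ∧ (d : Set V) = ↑b \ S ∧
      c ⊓ d = a ∧ c ⊔ d = b := by
  refine ⟨⟨_, hS.isLowerSet_union a.lower b.lower hSb⟩,
    ⟨_, hS.isLowerSet_sdiff a.lower b.lower hSb⟩, rfl, rfl,
    SetLike.coe_injective ?_, SetLike.coe_injective ?_⟩ <;>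
  · ext x
    have hx := @hSb x
    have hxab := @hab x
    simp only [LowerSet.coe_inf, LowerSet.coe_sup, LowerSet.coe_mk, Set.mem_inter_iff,
      Set.mem_union, Set.mem_sdiff, SetLike.mem_coe] at hx hxab ⊢
    tauto

theorem Zset_eq_reachSet (z q p b : Set V) : Zset z q p b = reachSet (p \ z) (p \ q) := rfl

theorem Bset_eq_reachSet (z q p b : Set V) : Bset z q p b = reachSet (b \ q) (p \ q) := rfl

theorem Zset_inter_Bset {z q p b : Set V} (hzq : z ⊆ q) (hpb : p ⊆ b) :
    Zset z q p b ∩ Bset z q p b = p \ q := by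
  refine Set.Subset.antisymm (fun x ⟨hxZ, hxB⟩ => ⟨hxZ.1.1, hxB.1.2⟩) fun x hx => ⟨?_, ?_⟩
  · exact subset_reachSet (Set.sdiff_subset_sdiff_right hzq) hx
  · exact subset_reachSet (Set.sdiff_subset_sdiff_left hpb) hx

theorem sdiff_eq_of_Zset_eq_of_Bset_eq {z q p b z' q' p' b' : Set V} (hzq : z ⊆ q)
    (hpb : p ⊆ b) (hzq' : z' ⊆ q') (hpb' : p' ⊆ b') (hZ : Zset z q p b = Zset z' q' p' b')
    (hB : Bset z q p b = Bset z' q' p' b') : p \ q = p' \ q' := by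
  rw [← Zset_inter_Bset hzq hpb, hZ, hB, Zset_inter_Bset hzq' hpb']

theorem Zset_union {z q p b z' q' p' b' : Set V} (hΔ : p \ q = p' \ q')
    (hZ : Zset z q p b = Zset z' q' p' b') :
    Zset (z ∪ z') (q ∪ q') (p ∪ p') (b ∪ b') = Zset z q p b := by
  simp only [Zset_eq_reachSet] at hZ ⊢
  rw [← hΔ] at hZ
  rw [union_sdiff_union_of_sdiff_eq hΔ]
  refine reachSet_eq_of_subset_union hZ (fun x hx => ?_) fun x hx => ?_
  · have hx' := hZ ▸ hx
    exact ⟨Or.inl hx.1.1, fun h => h.elim hx.1.2 hx'.1.2⟩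
  · simp only [Set.mem_union, Set.mem_sdiff] at hx ⊢
    tauto

theorem Bset_union {z q p b z' q' p' b' : Set V} (hΔ : p \ q = p' \ q')
    (hB : Bset z q p b = Bset z' q' p' b') :
    Bset (z ∪ z') (q ∪ q') (p ∪ p') (b ∪ b') = Bset z q p b := by
  simp only [Bset_eq_reachSet] at hB ⊢
  rw [← hΔ] at hB
  rw [union_sdiff_union_of_sdiff_eq hΔ]
  refine reachSet_eq_of_subset_union hB (fun x hx => ?_) fun x hx => ?_
  · have hx' := hB ▸ hx
    exact ⟨Or.inl hx.1.1, fun h => h.elim hx.1.2 hx'.1.2⟩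
  · simp only [Set.mem_union, Set.mem_sdiff] at hx ⊢
    tauto

end Components

section Splitting

variable {J : Type*} [Preorder J]

/-- The squares are cut out by `Z`: `c = z ∪ Z`, `w = p \ Z` and `W = p₁ \ Z`. -/
theorem exists_inf_sup_of_Zset_eq {z q p b z₁ q₁ p₁ b₁ : LowerSet J} (hzq : z ≤ q)
    (hqp : q ≤ p) (hzq₁ : z₁ ≤ q₁) (hqp₁ : q₁ ≤ p₁) (hq : q ≤ q₁) (hp : p ≤ p₁)
    (hinf : p ⊓ q₁ = q) (hZ : Zset (z : Set J) q p b = Zset (z₁ : Set J) q₁ p₁ b₁) :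
    ∃ c w W : LowerSet J, c ⊓ w = z ∧ c ⊔ w = p ∧ q ⊓ W = w ∧ q ⊔ W = q₁ ∧ z₁ ≤ W := by
  set Z := Zset (z : Set J) q p b
  have hZp : Z ⊆ ↑p \ ↑z := reachSet_subset _ _
  have hZp₁ : Z ⊆ ↑p₁ \ ↑z₁ := hZ ▸ reachSet_subset _ _
  have hΔ : (p : Set J) \ ↑q ⊆ Z := subset_reachSet (Set.sdiff_subset_sdiff_right hzq)
  have hΔ₁ : (p₁ : Set J) \ ↑q₁ ⊆ Z :=
    hZ ▸ subset_reachSet (Set.sdiff_subset_sdiff_right hzq₁)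
  obtain ⟨c, w, -, hw, hcw, hcw'⟩ :=
    (isStepClosed_reachSet _ _).exists_lowerSet_split (hzq.trans hqp) hZp
  obtain ⟨-, W, -, hW, -, -⟩ := (hZ ▸ isStepClosed_reachSet _ _ : IsStepClosed _ Z)
    |>.exists_lowerSet_split (hzq₁.trans hqp₁) hZp₁
  refine ⟨c, w, W, hcw, hcw', SetLike.coe_injective ?_, SetLike.coe_injective ?_, ?_⟩
  · rw [LowerSet.coe_inf, hW, hw]
    ext x
    refine ⟨fun ⟨hxq, _, hxZ⟩ => ⟨hqp hxq, hxZ⟩, fun ⟨hxp, hxZ⟩ => ⟨?_, hp hxp, hxZ⟩⟩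
    exact Set.sdiff_subset_comm.1 hΔ ⟨hxp, hxZ⟩
  · rw [LowerSet.coe_sup, hW]
    refine Set.Subset.antisymm (Set.union_subset hq (Set.sdiff_subset_comm.1 hΔ₁))
      fun x hxq₁ => ?_
    by_cases hxZ : x ∈ Z
    · exact Or.inl (hinf ▸ LowerSet.mem_inf_iff.2 ⟨(hZp hxZ).1, hxq₁⟩)
    · exact Or.inr ⟨hqp₁ hxq₁, hxZ⟩
  · rw [← LowerSet.coe_subset_coe, hW]
    exact fun x hx => ⟨hqp₁ (hzq₁ hx), fun hxZ => (hZp₁ hxZ).2 hx⟩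

/-- The squares are cut out by `B`: `D = q ∪ B`, `D₁ = q₁ ∪ B` and `c = b₁ \ B`. -/
theorem exists_inf_sup_of_Bset_eq {z q p b z₁ q₁ p₁ b₁ : LowerSet J} (hqp : q ≤ p)
    (hpb : p ≤ b) (hqp₁ : q₁ ≤ p₁) (hpb₁ : p₁ ≤ b₁) (hq : q ≤ q₁) (hp : p ≤ p₁)
    (hsup : p ⊔ q₁ = p₁) (hB : Bset (z : Set J) q p b = Bset (z₁ : Set J) q₁ p₁ b₁) :
    ∃ D D₁ c : LowerSet J, D ≤ b ∧ D ⊓ p₁ = p ∧ D ⊔ p₁ = D₁ ∧ c ⊓ D₁ = q₁ ∧ c ⊔ D₁ = b₁ := by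
  set B := Bset (z : Set J) q p b
  have hBb : B ⊆ ↑b \ ↑q := reachSet_subset _ _
  have hBb₁ : B ⊆ ↑b₁ \ ↑q₁ := hB ▸ reachSet_subset _ _
  have hΔ : (p : Set J) \ ↑q ⊆ B := subset_reachSet (Set.sdiff_subset_sdiff_left hpb)
  have hΔ₁ : (p₁ : Set J) \ ↑q₁ ⊆ B :=
    hB ▸ subset_reachSet (Set.sdiff_subset_sdiff_left hpb₁)
  obtain ⟨D, -, hD, -, -, -⟩ :=
    (isStepClosed_reachSet _ _).exists_lowerSet_split (hqp.trans hpb) hBb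
  obtain ⟨D₁, c, hD₁, -, hD₁c, hD₁c'⟩ := (hB ▸ isStepClosed_reachSet _ _ : IsStepClosed _ B)
    |>.exists_lowerSet_split (hqp₁.trans hpb₁) hBb₁
  refine ⟨D, D₁, c, ?_, SetLike.coe_injective ?_, SetLike.coe_injective ?_,
    (inf_comm c D₁).trans hD₁c, (sup_comm c D₁).trans hD₁c'⟩
  · rw [← LowerSet.coe_subset_coe, hD]
    exact Set.union_subset (hqp.trans hpb) fun y hyB => (hBb hyB).1
  · rw [LowerSet.coe_inf, hD]
    refine Set.Subset.antisymm (fun y ⟨hy, hyp₁⟩ => hy.elim (fun hyq => hqp hyq) fun hyB => ?_)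
      (Set.subset_inter (Set.sdiff_subset_iff.1 hΔ) hp)
    rw [← hsup] at hyp₁
    exact hyp₁.resolve_right (hBb₁ hyB).2
  · rw [LowerSet.coe_sup, hD, hD₁]
    exact Set.Subset.antisymm
      (Set.union_subset (Set.union_subset_union_left B hq) (Set.sdiff_subset_iff.1 hΔ₁))
      (Set.union_subset (fun y hy => Or.inr (hqp₁ hy)) fun y hy => Or.inl (Or.inr hy))

end Splitting

theorem ExactCoupleSystem.IsExcisive.nonempty_sterm_equiv_of_le {J : Type u} [PartialOrder J]
    {X : ExactCoupleSystem.{u, v} (LowerSet J)} (hexc : X.IsExcisive)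
    {z q p b z₁ q₁ p₁ b₁ : LowerSet J} (hzq : z ≤ q) (hqp : q ≤ p) (hpb : p ≤ b)
    (hzq₁ : z₁ ≤ q₁) (hqp₁ : q₁ ≤ p₁) (hpb₁ : p₁ ≤ b₁)
    (hz : z ≤ z₁) (hq : q ≤ q₁) (hp : p ≤ p₁) (hb : b ≤ b₁)
    (hZ : Zset (z : Set J) q p b = Zset (z₁ : Set J) q₁ p₁ b₁)
    (hB : Bset (z : Set J) q p b = Bset (z₁ : Set J) q₁ p₁ b₁) :
    Nonempty (X.Sterm hzq hqp hpb ≃+ X.Sterm hzq₁ hqp₁ hpb₁) := by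
  have hΔ := sdiff_eq_of_Zset_eq_of_Bset_eq (LowerSet.coe_subset_coe.2 hzq)
    (LowerSet.coe_subset_coe.2 hpb) (LowerSet.coe_subset_coe.2 hzq₁)
    (LowerSet.coe_subset_coe.2 hpb₁) hZ hB
  have hinf : p ⊓ q₁ = q := SetLike.coe_injective <| by
    rw [LowerSet.coe_inf]
    ext y
    refine ⟨fun ⟨hyp, hyq₁⟩ => ?_, fun hyq => ⟨hqp hyq, hq hyq⟩⟩
    by_contra hyq
    exact (hΔ ▸ (⟨hyp, hyq⟩ : y ∈ (p : Set J) \ q) : y ∈ (p₁ : Set J) \ q₁).2 hyq₁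
  have hsup : p ⊔ q₁ = p₁ := SetLike.coe_injective <| by
    rw [LowerSet.coe_sup]
    ext y
    refine ⟨fun hy => hy.elim (fun hyp => hp hyp) fun hyq₁ => hqp₁ hyq₁, fun hyp₁ => ?_⟩
    by_cases hyq₁ : y ∈ q₁
    · exact Or.inr hyq₁
    · exact Or.inl (hΔ ▸ (⟨hyp₁, hyq₁⟩ : y ∈ (p₁ : Set J) \ q₁) : y ∈ (p : Set J) \ q).1
  obtain ⟨c, w, W, hcw, hcw', hqW, hqW', hz₁W⟩ :=
    exists_inf_sup_of_Zset_eq hzq hqp hzq₁ hqp₁ hq hp hinf hZ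
  obtain ⟨D, D₁, c', hDb, hDp₁, hDp₁', hcD₁, hcD₁'⟩ :=
    exists_inf_sup_of_Bset_eq hqp hpb hqp₁ hpb₁ hq hp hsup hB
  exact ⟨X.stermEquivOfBijective hzq hqp hpb hzq₁ hqp₁ hpb₁ hz hq hp hb
    (hexc.bijective_l hinf hsup hqp hqp₁ hp hq)
    (fun _ => hexc.mem_ker_of_l_mem_ker hzq hqp hzq₁ hqp₁ hq hp hcw hcw' hqW hqW' hz₁W)
    (fun _ => hexc.mem_range_of_l_mem_range hqp hpb hqp₁ hpb₁ hq hp hinf hsup hDb hDp₁ hDp₁'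
      hcD₁ hcD₁')⟩

/-- Natural isomorphisms 2: for an excisive exact couple system over the
lattice of downsets `D(J)` of a poset `J`, two quadruples of downsets `z ⊆ q ⊆ p ⊆ b` and
`z' ⊆ q' ⊆ p' ⊆ b'` with `Z(z,q,p,b) = Z(z',q',p',b')` and `B(z,q,p,b) = B(z',q',p',b')`
have isomorphic S-terms. -/
theorem statement19 {J : Type u} [PartialOrder J]
    (X : ExactCoupleSystem.{u, v} (LowerSet J)) (hexc : X.IsExcisive)
    {z q p b z' q' p' b' : LowerSet J}
    (hzq : z ≤ q) (hqp : q ≤ p) (hpb : p ≤ b)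
    (hzq' : z' ≤ q') (hqp' : q' ≤ p') (hpb' : p' ≤ b')
    (hZ : Zset (z : Set J) ↑q ↑p ↑b = Zset (z' : Set J) ↑q' ↑p' ↑b')
    (hB : Bset (z : Set J) ↑q ↑p ↑b = Bset (z' : Set J) ↑q' ↑p' ↑b') :
    Nonempty (X.Sterm hzq hqp hpb ≃+ X.Sterm hzq' hqp' hpb') := by
  have hΔ := sdiff_eq_of_Zset_eq_of_Bset_eq (LowerSet.coe_subset_coe.2 hzq)
    (LowerSet.coe_subset_coe.2 hpb) (LowerSet.coe_subset_coe.2 hzq')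
    (LowerSet.coe_subset_coe.2 hpb') hZ hB
  have hZsup : Zset (z : Set J) q p b =
      Zset (↑(z ⊔ z') : Set J) ↑(q ⊔ q') ↑(p ⊔ p') ↑(b ⊔ b') := by
    simp only [LowerSet.coe_sup]
    exact (Zset_union hΔ hZ).symm
  have hBsup : Bset (z : Set J) q p b =
      Bset (↑(z ⊔ z') : Set J) ↑(q ⊔ q') ↑(p ⊔ p') ↑(b ⊔ b') := by
    simp only [LowerSet.coe_sup]
    exact (Bset_union hΔ hB).symm
  obtain ⟨f⟩ := hexc.nonempty_sterm_equiv_of_le hzq hqp hpb (sup_le_sup hzq hzq')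
    (sup_le_sup hqp hqp') (sup_le_sup hpb hpb') le_sup_left le_sup_left le_sup_left le_sup_left
    hZsup hBsup
  obtain ⟨g⟩ := hexc.nonempty_sterm_equiv_of_le hzq' hqp' hpb' (sup_le_sup hzq hzq')
    (sup_le_sup hqp hqp') (sup_le_sup hpb hpb') le_sup_right le_sup_right le_sup_right
    le_sup_right (hZ.symm.trans hZsup) (hB.symm.trans hBsup)
  exact ⟨f.trans g.symm⟩
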